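/- arXiv:2601.10289 — 4 statements merged into one kernel-verified Lean document; each statement's English description precedes it below -/
import Mathlib

section
/- Let U be the n×n matrix with entries U(j,k) = ω^(j·k)/√n where ω = exp(2πi/n), indices j,k ∈ {0,...,n-1}. For mode-assignment vectors d_r, d_s ∈ {0,...,n-1}^n and a shift k, let d_s' be defined by d_s'(i) = d_s(i) + k mod n. Then the permanent of the submatrix with rows d_s' and columns d_r equals ω^(k·Q) times the permanent of the submatrix with rows d_s and columns d_r, where Q = ∑_i d_r(i) mod n. In particular the squared moduli of the two permanents are equal. -/
open Complex Real

theorem stmt_8 (n : ℕ) [NeZero n] (d_r d_s : Fin n → Fin n) (k : ℕ)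
    (ω : ℂ) (hω : ω = Complex.exp (2 * π * I / n))
    (U : Matrix (Fin n) (Fin n) ℂ)
    (hU : ∀ j l : Fin n, U j l = ω ^ ((j : ℕ) * (l : ℕ)) / Real.sqrt n)
    (per : Matrix (Fin n) (Fin n) ℂ → ℂ)
    (hper : ∀ A, per A = ∑ σ : Equiv.Perm (Fin n), ∏ i, A i (σ i))
    (d_s' : Fin n → Fin n) (hshift : ∀ i, d_s' i = d_s i + (Fin.ofNat n k))
    (Q : ℕ) (hQ : Q = (∑ i, (d_r i : ℕ)) % n) :
    per (fun i j => U (d_s' i) (d_r j)) = ω ^ (k * Q) * per (fun i j => U (d_s i) (d_r j)) ∧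
    ‖per (fun i j => U (d_s' i) (d_r j))‖ ^ 2 =
      ‖per (fun i j => U (d_s i) (d_r j))‖ ^ 2 := by
  have hn : (n : ℂ) ≠ 0 := Nat.cast_ne_zero.2 (NeZero.ne n)
  have hωn : ω ^ n = 1 := by
    rw [hω, ← Complex.exp_nat_mul, mul_div_cancel₀ _ hn]
    simpa [mul_comm] using Complex.exp_two_pi_mul_I
  have hmod : ∀ a : ℕ, ω ^ a = ω ^ (a % n) := by
    intro a
    conv_lhs => rw [← Nat.div_add_mod a n]
    rw [pow_add, pow_mul, hωn, one_pow, one_mul]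
  have key : ∀ i j, U (d_s' i) (d_r j) = ω ^ (k * (d_r j : ℕ)) * U (d_s i) (d_r j) := by
    intro i j
    rw [hU, hU, hshift]
    have hval : (((d_s i + (Fin.ofNat n k)) : Fin n) : ℕ) % n = ((d_s i : ℕ) + k) % n := by
      rw [Fin.val_add, Fin.val_ofNat]
      conv_rhs => rw [Nat.add_mod]
      simp [Nat.mod_mod, Nat.add_mod]
    have h1 : ω ^ ((((d_s i + (Fin.ofNat n k)) : Fin n) : ℕ) * (d_r j : ℕ))
        = ω ^ (((d_s i : ℕ) + k) * (d_r j : ℕ)) := by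
      rw [hmod, hmod (((d_s i : ℕ) + k) * (d_r j : ℕ))]
      congr 1
      rw [Nat.mul_mod, Nat.mul_mod ((d_s i : ℕ) + k), hval]
    rw [h1, add_mul, pow_add]
    ring
  have hsum : ∀ σ : Equiv.Perm (Fin n), (∑ i, k * (d_r (σ i) : ℕ)) = k * (∑ i, (d_r i : ℕ)) := by
    intro σ
    rw [← Finset.mul_sum]
    congr 1
    exact Equiv.sum_comp σ (fun i => (d_r i : ℕ))
  have hkQ : ω ^ (k * (∑ i, (d_r i : ℕ))) = ω ^ (k * Q) := by
    rw [hmod, hmod (k * Q)]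
    congr 1
    rw [Nat.mul_mod, Nat.mul_mod k Q, hQ, Nat.mod_mod]
  have hmain : per (fun i j => U (d_s' i) (d_r j)) = ω ^ (k * Q) * per (fun i j => U (d_s i) (d_r j)) := by
    rw [hper (fun i j => U (d_s' i) (d_r j)), hper (fun i j => U (d_s i) (d_r j)), Finset.mul_sum]
    apply Finset.sum_congr rfl
    intro σ _
    simp only [key]
    rw [Finset.prod_mul_distrib, Finset.prod_pow_eq_pow_sum, hsum, hkQ]
  refine ⟨hmain, ?_⟩
  have habs : ‖ω‖ = 1 := by
    rw [hω, Complex.norm_exp]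
    have : (2 * (π : ℂ) * I / n).re = 0 := by
      simp [Complex.div_re, Complex.mul_re, Complex.mul_im]
    rw [this, Real.exp_zero]
  rw [hmain, norm_mul, norm_pow, habs, one_pow, one_mul]
end

section
/- Let n ≥ 1, ω = exp(2πi/n), and let p : Fin n → Z be a vector of integers. Consider C = (1/n^n) · ∑_{d ∈ ({0,...,n-1})^n, ∑_i d_i ≡ y (mod n)} ω^(∑_i p_i·d_i). If all p_i are congruent to a common value j modulo n, then C = ω^(y·j)/n; otherwise C = 0. -/
open Complex Real

private lemma sum_split_aux {n : ℕ} (i0 : Fin n) {M : Type*} [AddCommMonoid M] (f : Fin n → M) :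
    ∑ i, f i = f i0 + ∑ i : {i : Fin n // i ≠ i0}, f i.val := by
  rw [← Finset.sum_erase_add Finset.univ f (Finset.mem_univ i0), add_comm]
  congr 1
  exact Finset.sum_subtype (Finset.univ.erase i0) (by simp) f

theorem stmt_9 (n : ℕ) (hn : 1 ≤ n) (p : Fin n → ℤ) (y : ℤ)
    (ω : ℂ) (hω : ω = Complex.exp (2 * π * I / n))
    (C : ℂ)
    (hC : C = (1 / (n : ℂ) ^ n) *
      ∑ d ∈ Finset.univ.filter
          (fun d : Fin n → Fin n => (∑ i, ((d i : ℕ) : ℤ)) % n = y % n),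
        ω ^ (∑ i, p i * ((d i : ℕ) : ℤ))) :
    (∀ j : ℤ, (∀ i, p i % n = j % n) → C = ω ^ (y * j) / n) ∧
    ((¬ ∃ j : ℤ, ∀ i, p i % n = j % n) → C = 0) := by
  haveI : NeZero n := ⟨by omega⟩
  have hnne : n ≠ 0 := by omega
  have hnc : (n : ℂ) ≠ 0 := Nat.cast_ne_zero.mpr hnne
  have hprim : IsPrimitiveRoot ω n := by
    rw [hω]; exact Complex.isPrimitiveRoot_exp n hnne
  have hω0 : ω ≠ 0 := hprim.ne_zero hnne
  have hpow : ∀ a b : ℤ, ((a : ZMod n) = (b : ZMod n)) → ω ^ a = ω ^ b := by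
    intro a b h
    have hd : (n : ℤ) ∣ b - a := ((ZMod.intCast_eq_intCast_iff _ _ _).mp h).dvd
    obtain ⟨k, hk⟩ := hd
    have hb : b = a + (n : ℤ) * k := by linarith
    rw [hb, zpow_add₀ hω0, zpow_mul, zpow_natCast, hprim.pow_eq_one, one_zpow, mul_one]
  set φ : Fin n → ZMod n := fun x => ((x : ℕ) : ZMod n) with hφ
  have hφadd : ∀ a b : Fin n, φ (a + b) = φ a + φ b := by
    intro a b
    simp only [hφ, Fin.val_add, ZMod.natCast_mod, Nat.cast_add]
  have hφ1 : φ 1 = 1 := by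
    simp only [hφ, Fin.val_one', ZMod.natCast_mod, Nat.cast_one]
  have hφsub : ∀ a b : Fin n, φ (a - b) = φ a - φ b := by
    intro a b
    have h := hφadd (a - b) b
    have h2 : a - b + b = a := by exact sub_add_cancel a b
    rw [h2] at h
    rw [eq_sub_iff_add_eq, ← h]
  set T := Finset.univ.filter
      (fun d : Fin n → Fin n => (∑ i, ((d i : ℕ) : ℤ)) % n = y % n) with hT
  have hmem : ∀ d : Fin n → Fin n, d ∈ T ↔ (∑ i, φ (d i)) = (y : ZMod n) := by
    intro d
    have hcast : ((∑ i, ((d i : ℕ) : ℤ) : ℤ) : ZMod n) = ∑ i, φ (d i) := by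
      push_cast; rfl
    rw [hT, Finset.mem_filter, ← ZMod.intCast_eq_intCast_iff', hcast]
    simp
  have hexp : ∀ d : Fin n → Fin n,
      ((∑ i, p i * ((d i : ℕ) : ℤ) : ℤ) : ZMod n) = ∑ i, (p i : ZMod n) * φ (d i) := by
    intro d; push_cast; rfl
  set i0 : Fin n := ⟨0, by omega⟩ with hi0def
  set ζ : ZMod n → Fin n := fun z => ⟨z.val, ZMod.val_lt z⟩ with hζ
  have hφζ : ∀ z : ZMod n, φ (ζ z) = z := fun z => ZMod.natCast_rightInverse z
  have hζφ : ∀ x : Fin n, ζ (φ x) = x := by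
    intro x
    apply Fin.ext
    simp only [hζ, hφ, ZMod.val_cast_of_lt x.isLt]
  have hcard : T.card = n ^ (n - 1) := by
    have : T.card = (Finset.univ : Finset ({i : Fin n // i ≠ i0} → Fin n)).card := by
      apply Finset.card_nbij' (fun d => fun k => d k.val)
        (fun g => fun i => if h : i = i0 then
            ζ ((y : ZMod n) - ∑ k : {i : Fin n // i ≠ i0}, φ (g k)) else g ⟨i, h⟩)
      · intro a _; exact Finset.mem_univ _
      · intro g _
        simp only [Finset.mem_coe]; rw [hmem]
        rw [sum_split_aux i0]
        rw [dif_pos rfl, hφζ]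
        have hrest : ∀ k : {i : Fin n // i ≠ i0},
            φ (if h : (k : Fin n) = i0 then
              ζ ((y : ZMod n) - ∑ k : {i : Fin n // i ≠ i0}, φ (g k)) else g ⟨k, h⟩) = φ (g k) := by
          intro k; rw [dif_neg k.prop]
        rw [Finset.sum_congr rfl (fun k _ => hrest k)]
        ring
      · intro d hd
        funext i
        by_cases h : i = i0
        · rw [h]; dsimp only; rw [dif_pos rfl]
          have hsum : φ (d i0) + ∑ k : {k : Fin n // k ≠ i0}, φ (d k.val) = (y : ZMod n) := by
            rw [← sum_split_aux i0 (fun k => φ (d k))]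
            exact (hmem d).mp hd
          rw [show (y : ZMod n) - ∑ k : {k : Fin n // k ≠ i0}, φ (d k.val) = φ (d i0) by
            rw [← hsum]; ring]
          exact hζφ (d i0)
        · dsimp only; rw [dif_neg h]
      · intro g _
        funext k
        simp only [dif_neg k.prop]
    rw [this, Finset.card_univ, Fintype.card_fun, Fintype.card_fin]
    congr 1
    rw [Fintype.card_subtype_compl, Fintype.card_subtype_eq, Fintype.card_fin]
  constructor
  · intro j hj
    have hterm : ∀ d ∈ T, ω ^ (∑ i, p i * ((d i : ℕ) : ℤ)) = ω ^ (y * j) := by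
      intro d hd
      apply hpow
      rw [hexp d]
      have h1 : ∀ i, (p i : ZMod n) = (j : ZMod n) := fun i =>
        (ZMod.intCast_eq_intCast_iff' _ _ _).mpr (hj i)
      have h2 : ∑ i, φ (d i) = (y : ZMod n) := (hmem d).mp hd
      push_cast
      calc ∑ i, (p i : ZMod n) * φ (d i) = ∑ i, (j : ZMod n) * φ (d i) := by
            exact Finset.sum_congr rfl (fun i _ => by rw [h1 i])
        _ = (j : ZMod n) * ∑ i, φ (d i) := by rw [Finset.mul_sum]
        _ = (y : ZMod n) * (j : ZMod n) := by rw [h2]; ring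
    rw [hC, Finset.sum_congr rfl hterm, Finset.sum_const, hcard, nsmul_eq_mul]
    have hnn : ((n : ℂ)) ^ n = (n : ℂ) ^ (n - 1) * (n : ℂ) := by
      rw [← pow_succ]
      congr 1
      omega
    rw [hnn]
    push_cast
    have hp0 : ((n : ℂ)) ^ (n - 1) ≠ 0 := pow_ne_zero _ hnc
    field_simp
  · intro hnex
    push_neg at hnex
    obtain ⟨i1, hi1⟩ := hnex (p i0)
    have hne : i1 ≠ i0 := by
      intro h; exact hi1 (by rw [h])
    have hne0 : i0 ≠ i1 := hne.symm
    set e : (Fin n → Fin n) → (Fin n → Fin n) := fun d =>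
      Function.update (Function.update d i0 (d i0 + 1)) i1 (d i1 - 1) with he
    set e' : (Fin n → Fin n) → (Fin n → Fin n) := fun d =>
      Function.update (Function.update d i0 (d i0 - 1)) i1 (d i1 + 1) with he'
    have he_at1 : ∀ d : Fin n → Fin n, e d i1 = d i1 - 1 := by
      intro d; simp only [he, Function.update_self]
    have he_at0 : ∀ d : Fin n → Fin n, e d i0 = d i0 + 1 := by
      intro d; simp only [he, Function.update_of_ne hne0, Function.update_self]
    have he_other : ∀ (d : Fin n → Fin n) (i : Fin n), i ≠ i0 → i ≠ i1 → e d i = d i := by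
      intro d i h0 h1; simp only [he, Function.update_of_ne h1, Function.update_of_ne h0]
    have he'_at1 : ∀ d : Fin n → Fin n, e' d i1 = d i1 + 1 := by
      intro d; simp only [he', Function.update_self]
    have he'_at0 : ∀ d : Fin n → Fin n, e' d i0 = d i0 - 1 := by
      intro d; simp only [he', Function.update_of_ne hne0, Function.update_self]
    have he'_other : ∀ (d : Fin n → Fin n) (i : Fin n), i ≠ i0 → i ≠ i1 → e' d i = d i := by
      intro d i h0 h1; simp only [he', Function.update_of_ne h1, Function.update_of_ne h0]
    have heval : ∀ (d : Fin n → Fin n) (i : Fin n),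
        φ (e d i) = φ (d i) + (if i = i0 then 1 else 0) - (if i = i1 then 1 else 0) := by
      intro d i
      by_cases h1 : i = i1
      · rw [h1, he_at1, hφsub, hφ1, if_pos rfl, if_neg hne]
        ring
      · by_cases h0 : i = i0
        · rw [h0, he_at0, hφadd, hφ1, if_pos rfl, if_neg hne0]
          ring
        · rw [he_other d i h0 h1, if_neg h0, if_neg h1]
          ring
    have he'val : ∀ (d : Fin n → Fin n) (i : Fin n),
        φ (e' d i) = φ (d i) - (if i = i0 then 1 else 0) + (if i = i1 then 1 else 0) := by
      intro d i
      by_cases h1 : i = i1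
      · rw [h1, he'_at1, hφadd, hφ1, if_pos rfl, if_neg hne]
        ring
      · by_cases h0 : i = i0
        · rw [h0, he'_at0, hφsub, hφ1, if_pos rfl, if_neg hne0]
          ring
        · rw [he'_other d i h0 h1, if_neg h0, if_neg h1]
          ring
    have hsum_ite : ∀ (c : Fin n) (g : Fin n → ZMod n),
        ∑ i, g i * (if i = c then (1 : ZMod n) else 0) = g c := by
      intro c g
      simp [Finset.sum_ite_eq', mul_ite]
    have heT : ∀ d ∈ T, e d ∈ T := by
      intro d hd
      rw [hmem] at hd ⊢
      calc ∑ i, φ (e d i)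
          = ∑ i, (φ (d i) + (1 : ZMod n) * (if i = i0 then 1 else 0)
              - (1 : ZMod n) * (if i = i1 then 1 else 0)) := by
            exact Finset.sum_congr rfl (fun i _ => by rw [heval d i]; ring)
        _ = ∑ i, φ (d i) := by
            rw [Finset.sum_sub_distrib, Finset.sum_add_distrib,
              hsum_ite i0 (fun _ => (1 : ZMod n)), hsum_ite i1 (fun _ => (1 : ZMod n))]
            ring
        _ = (y : ZMod n) := hd
    have he'T : ∀ d ∈ T, e' d ∈ T := by
      intro d hd
      rw [hmem] at hd ⊢
      calc ∑ i, φ (e' d i)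
          = ∑ i, (φ (d i) - (1 : ZMod n) * (if i = i0 then 1 else 0)
              + (1 : ZMod n) * (if i = i1 then 1 else 0)) := by
            exact Finset.sum_congr rfl (fun i _ => by rw [he'val d i]; ring)
        _ = ∑ i, φ (d i) := by
            rw [Finset.sum_add_distrib, Finset.sum_sub_distrib,
              hsum_ite i0 (fun _ => (1 : ZMod n)), hsum_ite i1 (fun _ => (1 : ZMod n))]
            ring
        _ = (y : ZMod n) := hd
    have hee' : ∀ d : Fin n → Fin n, e (e' d) = d := by
      intro d
      funext i
      by_cases h1 : i = i1
      · rw [h1, he_at1, he'_at1]; simp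
      · by_cases h0 : i = i0
        · rw [h0, he_at0, he'_at0]; simp
        · rw [he_other _ i h0 h1, he'_other d i h0 h1]
    have he'e : ∀ d : Fin n → Fin n, e' (e d) = d := by
      intro d
      funext i
      by_cases h1 : i = i1
      · rw [h1, he'_at1, he_at1]; simp
      · by_cases h0 : i = i0
        · rw [h0, he'_at0, he_at0]; simp
        · rw [he'_other _ i h0 h1, he_other d i h0 h1]
    set c : ℤ := p i0 - p i1 with hc
    set S : ℂ := ∑ d ∈ T, ω ^ (∑ i, p i * ((d i : ℕ) : ℤ)) with hS
    have hFe : ∀ d : Fin n → Fin n,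
        ω ^ (c + ∑ i, p i * ((e' d i : ℕ) : ℤ)) = ω ^ (∑ i, p i * ((d i : ℕ) : ℤ)) := by
      intro d
      apply hpow
      rw [Int.cast_add, hexp (e' d), hexp d]
      calc (c : ZMod n) + ∑ i, (p i : ZMod n) * φ (e' d i)
          = (c : ZMod n) + ∑ i, ((p i : ZMod n) * φ (d i)
              - (p i : ZMod n) * (if i = i0 then 1 else 0)
              + (p i : ZMod n) * (if i = i1 then 1 else 0)) := by
            congr 1
            exact Finset.sum_congr rfl (fun i _ => by rw [he'val d i]; ring)
        _ = (c : ZMod n) + (∑ i, (p i : ZMod n) * φ (d i) - (p i0 : ZMod n) + (p i1 : ZMod n)) := by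
            rw [Finset.sum_add_distrib, Finset.sum_sub_distrib,
              hsum_ite i0 (fun i => (p i : ZMod n)), hsum_ite i1 (fun i => (p i : ZMod n))]
        _ = ∑ i, (p i : ZMod n) * φ (d i) := by
            rw [hc]; push_cast; ring
    have hkey : S = ω ^ c * S := by
      rw [hS, Finset.mul_sum]
      apply Finset.sum_nbij' e' e he'T heT (fun a _ => hee' a) (fun a _ => he'e a)
      intro d hd
      rw [← zpow_add₀ hω0, hFe d]
    have hc1 : ω ^ c ≠ 1 := by
      intro h
      have hdvd : (n : ℤ) ∣ c := by
        have := (hprim.zpow_eq_one_iff_dvd c).mp h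
        exact_mod_cast this
      apply hi1
      have : p i0 ≡ p i1 [ZMOD (n : ℤ)] := by
        rw [Int.modEq_iff_dvd]
        simpa [hc] using (dvd_neg.mpr hdvd)
      exact this.symm
    have hS0 : S = 0 := by
      by_contra hS0
      apply hc1
      have hkey' : S * 1 = S * ω ^ c := by rw [mul_one, mul_comm (ω ^ c) S] at *; exact hkey
      exact (mul_left_cancel₀ hS0 hkey').symm
    rw [hC, hS0, mul_zero]
end

section
/- For n ≥ 2, the matrix A ∈ ℝ^{n × x(n)}, indexed by rows i ∈ {1,...,n} and columns j ranging over divisors of n, with entries A(i,j) = (1/j) if i ≡ 0 (mod n/j) and 0 otherwise, has full column rank (its columns are linearly independent). -/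
theorem stmt_11 (n : ℕ) (hn : 2 ≤ n) :
    LinearIndependent ℝ (fun j : {j // j ∈ Nat.divisors n} =>
      (fun i : Fin n => if (n / (j : ℕ)) ∣ ((i : ℕ) + 1) then (1 : ℝ) / ((j : ℕ) : ℝ) else 0)) := by
  have hn0 : n ≠ 0 := by omega
  have hdvd_lem : ∀ x y : ℕ, x ∣ y → y ∣ n → n / y ∣ n / x := by
    intro x y hxy hyn
    have hy0 : y ≠ 0 := by rintro rfl; exact hn0 (Nat.eq_zero_of_zero_dvd hyn)
    have hx0 : x ≠ 0 := by rintro rfl; exact hy0 (Nat.eq_zero_of_zero_dvd hxy)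
    obtain ⟨k, hk⟩ := hxy
    obtain ⟨m, hm⟩ := hyn
    have h1 : n / x = k * m := by
      subst hk hm; rw [Nat.mul_assoc, Nat.mul_div_cancel_left _ (Nat.pos_of_ne_zero hx0)]
    have h2 : n / y = m := by
      subst hm; rw [Nat.mul_div_cancel_left _ (Nat.pos_of_ne_zero hy0)]
    rw [h1, h2]; exact dvd_mul_left m k
  rw [linearIndependent_iff']
  intro s g hsum j hj
  have key : ∀ m : ℕ, ∀ j : {j // j ∈ Nat.divisors n}, j ∈ s → n - (j : ℕ) < m → g j = 0 := by
    intro m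
    induction m with
    | zero => intro j _ h; omega
    | succ m ih =>
      intro j hj hm
      have hjd : (j : ℕ) ∣ n := Nat.dvd_of_mem_divisors j.2
      have hjpos : 0 < (j : ℕ) := Nat.pos_of_mem_divisors j.2
      have hq1 : 1 ≤ n / (j : ℕ) := (Nat.one_le_div_iff hjpos).mpr (Nat.le_of_dvd (by omega) hjd)
      have hqn : n / (j : ℕ) ≤ n := Nat.div_le_self n _
      set i : Fin n := ⟨n / (j : ℕ) - 1, by omega⟩ with hi
      have h0 := congrFun hsum i
      simp only [Finset.sum_apply, Pi.smul_apply, Pi.zero_apply, smul_eq_mul] at h0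
      have hrow : (i : ℕ) + 1 = n / (j : ℕ) := by simp only [hi]; omega
      rw [Finset.sum_eq_single j] at h0
      · rw [hrow, if_pos dvd_rfl] at h0
        have hjne : ((j : ℕ) : ℝ) ≠ 0 := Nat.cast_ne_zero.mpr (by omega)
        have : (1 : ℝ) / ((j : ℕ) : ℝ) ≠ 0 := by positivity
        rcases mul_eq_zero.mp h0 with h | h
        · exact h
        · exact absurd h this
      · intro j' hj' hne
        by_cases hdd : (j : ℕ) ∣ (j' : ℕ)
        · have hz : g j' = 0 := by
            apply ih j' hj'
            have hne' : (j : ℕ) ≠ (j' : ℕ) := fun h => hne (Subtype.ext h.symm)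
            have hlt : (j : ℕ) < (j' : ℕ) :=
              lt_of_le_of_ne (Nat.le_of_dvd (Nat.pos_of_mem_divisors j'.2) hdd) hne'
            have hj'n : (j' : ℕ) ≤ n := Nat.le_of_dvd (by omega) (Nat.dvd_of_mem_divisors j'.2)
            omega
          simp [hz]
        · have hnd : ¬ (n / (j' : ℕ) ∣ (i : ℕ) + 1) := by
            rw [hrow]; intro hcon
            have h1 : n / (n / (j : ℕ)) ∣ n / (n / (j' : ℕ)) :=
              hdvd_lem _ _ hcon (Nat.div_dvd_of_dvd hjd)
            rw [Nat.div_div_self hjd hn0,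
              Nat.div_div_self (Nat.dvd_of_mem_divisors j'.2) hn0] at h1
            exact hdd h1
          simp [hnd]
      · intro h; exact absurd hj h
  exact key (n + 1) j hj (by omega)
end

section
/- Let n be a positive integer and R the n × x(n) matrix with R(i,j) = 1 if j = n/gcd(i,n) and 0 otherwise (rows i ∈ {1,...,n}, columns j ranging over divisors of n). Then the Moore–Penrose pseudoinverse of R is the x(n) × n matrix R⁺ with entries R⁺(j,i) = 1/φ(j) if j = n/gcd(i,n) and 0 otherwise. -/
open Finset

lemma card_fiber (n j : ℕ) (hn : 0 < n) (hj : j ∣ n) :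
    #{i : Fin n | (j : ℕ) = n / Nat.gcd ((i : ℕ) + 1) n} = Nat.totient j := by
  have hnj : n / j ∣ n := Nat.div_dvd_of_dvd hj
  have key : Nat.totient (n / (n / j)) = #{k ∈ range n | n.gcd k = n / j} :=
    Nat.totient_div_of_dvd hnj
  rw [Nat.div_div_self hj hn.ne'] at key
  rw [key]
  have hcond : ∀ i : Fin n,
      ((j : ℕ) = n / Nat.gcd ((i : ℕ) + 1) n) ↔ n.gcd (((i : ℕ) + 1) % n) = n / j := by
    intro i
    have hg : Nat.gcd n (((i : ℕ) + 1) % n) = Nat.gcd ((i : ℕ) + 1) n := by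
      rw [Nat.gcd_comm, ← Nat.gcd_rec, Nat.gcd_comm]
    rw [hg]
    have hgdvd : Nat.gcd ((i : ℕ) + 1) n ∣ n := Nat.gcd_dvd_right _ _
    constructor
    · rintro rfl
      rw [Nat.div_div_self hgdvd hn.ne']
    · intro h
      rw [h, Nat.div_div_self hj hn.ne']
  apply Finset.card_nbij (fun i : Fin n => ((i : ℕ) + 1) % n)
  · intro i hi
    simp only [mem_filter, mem_univ, true_and, mem_range, mem_coe] at hi ⊢
    exact ⟨Nat.mod_lt _ hn, (hcond i).1 hi⟩
  · intro a _ b _ hab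
    simp only at hab
    have ha' : (a : ℕ) < n := a.2
    have hb' : (b : ℕ) < n := b.2
    have h1 : ((a : ℕ) + 1) % n = if (a : ℕ) + 1 = n then 0 else (a : ℕ) + 1 := by
      split_ifs with h
      · simp [h]
      · exact Nat.mod_eq_of_lt (by omega)
    have h2 : ((b : ℕ) + 1) % n = if (b : ℕ) + 1 = n then 0 else (b : ℕ) + 1 := by
      split_ifs with h
      · simp [h]
      · exact Nat.mod_eq_of_lt (by omega)
    rw [h1, h2] at hab
    apply Fin.ext
    split_ifs at hab <;> omega
  · intro k hk
    simp only [mem_coe, mem_filter, mem_range] at hk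
    obtain ⟨hklt, hkg⟩ := hk
    refine ⟨⟨if k = 0 then n - 1 else k - 1, by split_ifs <;> omega⟩, ?_, ?_⟩
    · simp only [mem_coe, mem_filter, mem_univ, true_and]
      have hg : Nat.gcd ((if k = 0 then n - 1 else k - 1) + 1) n = n / j := by
        split_ifs with h
        · subst h
          rw [Nat.gcd_zero_right] at hkg
          have : n - 1 + 1 = n := by omega
          rw [this, Nat.gcd_self]; exact hkg
        · have : k - 1 + 1 = k := by omega
          rw [this, Nat.gcd_comm, hkg]
      rw [hg, Nat.div_div_self hj hn.ne']
    · simp only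
      split_ifs with h
      · subst h
        have : n - 1 + 1 = n := by omega
        rw [this, Nat.mod_self]
      · have : k - 1 + 1 = k := by omega
        rw [this, Nat.mod_eq_of_lt hklt]

theorem stmt_14 (n : ℕ) (hn : 0 < n)
    (R : Matrix (Fin n) {d // d ∈ Nat.divisors n} ℝ)
    (hR : ∀ i j, R i j = if (j : ℕ) = n / Nat.gcd ((i : ℕ) + 1) n then 1 else 0)
    (Rp : Matrix {d // d ∈ Nat.divisors n} (Fin n) ℝ)
    (hRp : ∀ j i, Rp j i = if (j : ℕ) = n / Nat.gcd ((i : ℕ) + 1) n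
      then 1 / (Nat.totient (j : ℕ) : ℝ) else 0) :
    R * Rp * R = R ∧ Rp * R * Rp = Rp ∧
    Matrix.transpose (R * Rp) = R * Rp ∧ Matrix.transpose (Rp * R) = Rp * R := by
  have hφpos : ∀ j : {d // d ∈ Nat.divisors n}, 0 < Nat.totient (j : ℕ) := fun j =>
    Nat.totient_pos.2 (Nat.pos_of_dvd_of_pos (Nat.dvd_of_mem_divisors j.2) hn)
  have h1 : Rp * R = 1 := by
    ext j k
    rw [Matrix.mul_apply]
    by_cases hjk : j = k
    · subst hjk
      rw [Matrix.one_apply_eq]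
      have hterm : ∀ i : Fin n, Rp j i * R i j =
          if (j : ℕ) = n / Nat.gcd ((i : ℕ) + 1) n
            then 1 / (Nat.totient (j : ℕ) : ℝ) else 0 := by
        intro i
        rw [hR, hRp]
        split_ifs <;> ring
      rw [Finset.sum_congr rfl fun i _ => hterm i, ← Finset.sum_filter,
        Finset.sum_const, nsmul_eq_mul]
      rw [card_fiber n (j : ℕ) hn (Nat.dvd_of_mem_divisors j.2)]
      field_simp
      exact div_self (Nat.cast_ne_zero.2 (hφpos j).ne')
    · rw [Matrix.one_apply_ne hjk]
      apply Finset.sum_eq_zero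
      intro i _
      rw [hR, hRp]
      split_ifs with h1 h2
      · exact absurd (Subtype.ext (h1.trans h2.symm)) hjk
      all_goals ring
  refine ⟨?_, ?_, ?_, ?_⟩
  · rw [Matrix.mul_assoc, h1, Matrix.mul_one]
  · rw [h1, Matrix.one_mul]
  · ext i i'
    rw [Matrix.transpose_apply, Matrix.mul_apply, Matrix.mul_apply]
    apply Finset.sum_congr rfl
    intro j _
    rw [hR, hR, hRp, hRp]
    split_ifs <;> ring
  · rw [h1, Matrix.transpose_one]
end
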